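/- arXiv:2107.11466 — 9 statements merged into one kernel-verified Lean document; each statement's English description precedes it below -/
import Mathlib

section
/- Let p be a prime and Int_(p) := Int ⊗ ℤ_(p), viewed as the localization at p of the ring of integer-valued polynomials. For x ∈ Int_(p) define δ(x) := (x − x^p)/p; then δ(x) ∈ Int_(p), i.e. δ is a well-defined map Int_(p) → Int_(p). -/
open Polynomial

/-- membership in `Int_(p) = Int ⊗ ℤ_(p)` viewed inside ℚ[u]: some multiple of f by an
integer prime to p is integer-valued. -/
def memIntLoc (p : ℕ) (f : Polynomial ℚ) : Prop :=
  ∃ n : ℤ, ¬ (p : ℤ) ∣ n ∧ ∀ m : ℤ, ∃ k : ℤ, (n : ℚ) * f.eval (m : ℚ) = (k : ℚ)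

/-- for f ∈ Int_(p), δ(f) := (f − f^p)/p again lies in Int_(p). -/
theorem stmt3 (p : ℕ) (hp : p.Prime) (f : Polynomial ℚ) (hf : memIntLoc p f) :
    memIntLoc p ((p : ℚ)⁻¹ • (f - f ^ p)) := by
  obtain ⟨n, hn, h⟩ := hf
  haveI : Fact p.Prime := ⟨hp⟩
  refine ⟨n ^ p, fun hd => hn ((Int.prime_iff_natAbs_prime.mpr (by simpa using hp)).dvd_of_dvd_pow hd), fun m => ?_⟩
  obtain ⟨k, hk⟩ := h m
  -- divisibility of the numerator
  have hdvd : (p : ℤ) ∣ n ^ (p - 1) * k - k ^ p := by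
    have : ((n ^ (p - 1) * k - k ^ p : ℤ) : ZMod p) = 0 := by
      push_cast
      have h1 : ((n : ZMod p)) ^ (p - 1) = 1 := by
        apply ZMod.pow_card_sub_one_eq_one
        simpa [ZMod.intCast_zmod_eq_zero_iff_dvd] using hn
      have h2 : ((k : ZMod p)) ^ p = (k : ZMod p) := ZMod.pow_card _
      rw [h1, h2]; ring
    exact (ZMod.intCast_zmod_eq_zero_iff_dvd _ _).mp this
  obtain ⟨q, hq⟩ := hdvd
  refine ⟨q, ?_⟩
  have hp0 : (p : ℚ) ≠ 0 := Nat.cast_ne_zero.mpr hp.pos.ne'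
  have hq' : (n : ℚ) ^ (p - 1) * k - k ^ p = p * q := by exact_mod_cast hq
  have hnp : (n : ℚ) ^ p = (n : ℚ) ^ (p - 1) * n := by
    rw [← pow_succ, Nat.sub_add_cancel hp.one_le]
  have hkp : (n : ℚ) ^ p * (f.eval (m : ℚ)) ^ p = (k : ℚ) ^ p := by rw [← mul_pow, hk]
  have hk1 : (n : ℚ) ^ p * f.eval (m : ℚ) = (n : ℚ) ^ (p - 1) * k := by
    rw [hnp, mul_assoc, hk]
  rw [eval_smul, eval_sub, eval_pow, smul_eq_mul]
  push_cast
  field_simp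
  rw [mul_sub, hkp, hk1]
  linarith [hq']
end

section
/- Let p be a prime. In the ring ℤ_(p)[u] ⊗-localized picture: the monomials ∏_i (δ^i(u))^{d_i}, where δ(x) := (x − x^p)/p, ranging over all sequences (d_i) with 0 ≤ d_i < p for all i and d_i = 0 for all but finitely many i, form a basis of the ℤ_(p)-module Int_(p) := Int ⊗ ℤ_(p). -/
open Polynomial

/-- membership in ℤ_(p) viewed inside ℚ. -/
def memZLoc (p : ℕ) (x : ℚ) : Prop :=
  ∃ a b : ℤ, ¬ (p : ℤ) ∣ b ∧ (b : ℚ) * x = (a : ℚ)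

/-- δ(x) := (x − x^p)/p. -/
noncomputable def deltaOp (p : ℕ) (x : Polynomial ℚ) : Polynomial ℚ :=
  (p : ℚ)⁻¹ • (x - x ^ p)

/-- the monomial ∏ᵢ (δ^i(u))^{dᵢ}. -/
noncomputable def deltaMonomial (p : ℕ) (d : ℕ →₀ ℕ) : Polynomial ℚ :=
  d.prod fun i e => ((deltaOp p)^[i] Polynomial.X) ^ e

/-!
`δ` preserves `Int_(p)` by Fermat's little theorem, so every monomial lies in `Int_(p)`. The
leading term of `δ g` is `-lc(g)^p / p · u^(p · deg g)`, so `δ^i(u)` has degree `p^i` and leading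
coefficient `±p^-(1 + p + ⋯ + p^(i-1))`. If `d` is the sequence of base-`p` digits of `N`, the
monomial with exponents `d` therefore has degree `N` and, by Legendre's formula, leading coefficient
`±p^-v_p(N!)`. On the other hand the `N`-th forward difference shows `N! · lc(f) ∈ ℤ_(p)` for every
`f ∈ Int_(p)` of degree `N`. So subtracting a `ℤ_(p)`-multiple of that monomial lowers the degree
of `f`, which gives existence by induction; uniqueness holds because the monomials have pairwise
distinct degrees.
-/

open scoped Nat

namespace Polynomial

variable {A : Type*} [CommRing A] [IsDomain A] {ι : Type*}

theorem linearIndependent_of_natDegree_eq (b : ι → A[X]) (e : ι ≃ ℕ) (hb : ∀ i, b i ≠ 0)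
    (hdeg : ∀ i, (b i).natDegree = e i) : LinearIndependent A b := by
  let S : Sequence A := ⟨fun n ↦ b (e.symm n), fun n ↦ by
    rw [degree_eq_natDegree (hb _), hdeg, e.apply_symm_apply]⟩
  simpa [S, Function.comp_def] using S.linearIndependent.comp e e.injective

variable {K : Type*} [Field K]

theorem mem_span_of_leadingCoeff_div_mem (R : Subring K) (M : AddSubgroup K[X])
    (hRM : ∀ r ∈ R, ∀ f ∈ M, C r * f ∈ M) (b : ι → K[X]) (hbM : ∀ i, b i ∈ M)
    (hb : ∀ f ∈ M, f ≠ 0 → ∃ i, b i ≠ 0 ∧ (b i).natDegree = f.natDegree ∧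
      f.leadingCoeff / (b i).leadingCoeff ∈ R)
    {f : K[X]} (hf : f ∈ M) : f ∈ Submodule.span R (Set.range b) := by
  induction f using degree_lt_wf.induction with
  | _ f ih =>
  rcases eq_or_ne f 0 with rfl | hf0
  · exact zero_mem _
  obtain ⟨i, hbi, hdeg, ha⟩ := hb f hf hf0
  set a := f.leadingCoeff / (b i).leadingCoeff
  have ha0 : a ≠ 0 := div_ne_zero (leadingCoeff_ne_zero.2 hf0) (leadingCoeff_ne_zero.2 hbi)
  have hlt : (f - C a * b i).degree < f.degree := by
    refine degree_sub_lt_left ?_ hf0 ?_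
    · rw [degree_C_mul ha0, degree_eq_natDegree hf0, degree_eq_natDegree hbi, hdeg]
    · rw [leadingCoeff_mul, leadingCoeff_C, div_mul_cancel₀ _ (leadingCoeff_ne_zero.2 hbi)]
  have hmem := ih _ hlt (sub_mem hf (hRM a ha _ (hbM i)))
  rw [← sub_add_cancel f (C a * b i)]
  have hai : C a * b i ∈ Submodule.span R (Set.range b) := by
    rw [← smul_eq_C_mul]
    exact Submodule.smul_mem _ (⟨a, ha⟩ : R) (Submodule.subset_span (Set.mem_range_self i))
  exact add_mem hmem hai

end Polynomial

theorem Submodule.exists_finsupp_of_mem_span_range {K V ι : Type*} [Ring K] [AddCommGroup V]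
    [Module K V] (R : Subring K) (b : ι → V) {x : V} (hx : x ∈ Submodule.span R (Set.range b)) :
    ∃ c : ι →₀ K, (∀ i, c i ∈ R) ∧ x = c.sum fun i a ↦ a • b i := by
  obtain ⟨c, rfl⟩ := Finsupp.mem_span_range_iff_exists_finsupp.1 hx
  refine ⟨c.mapRange Subtype.val rfl, fun i ↦ by simp, ?_⟩
  exact (Finsupp.sum_mapRange_index (h := fun i (a : K) ↦ a • b i)
    fun i ↦ zero_smul K (b i)).symm

namespace Finsupp

noncomputable def shiftDown (d : ℕ →₀ ℕ) : ℕ →₀ ℕ :=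
  d.comapDomain Nat.succ Nat.succ_injective.injOn

@[simp]
theorem shiftDown_apply (d : ℕ →₀ ℕ) (i : ℕ) : d.shiftDown i = d (i + 1) := rfl

theorem sum_eq_add_sum_shiftDown {M : Type*} [AddCommMonoid M] (d : ℕ →₀ ℕ)
    (g : ℕ → ℕ → M) (hg : ∀ i, g i 0 = 0) :
    d.sum g = g 0 (d 0) + d.shiftDown.sum fun i ↦ g (i + 1) := by
  set n := d.support.sup id
  have hd : d.support ⊆ Finset.range (n + 1) := fun i hi ↦
    Finset.mem_range.2 (Nat.lt_succ_of_le (Finset.le_sup (f := id) hi))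
  have hshift : d.shiftDown.support ⊆ Finset.range n := fun i hi ↦
    Finset.mem_range.2 (Nat.succ_le_iff.1 (Finset.le_sup (f := id) (by simpa using hi)))
  rw [sum_of_support_subset d hd g fun i _ ↦ hg i, Finset.sum_range_succ', add_comm,
    sum_of_support_subset _ hshift _ fun i _ ↦ hg (i + 1)]
  rfl

end Finsupp

section Digits

open Finsupp

variable {p : ℕ}

def digitValue (p : ℕ) (d : ℕ →₀ ℕ) : ℕ := d.sum fun i a ↦ a * p ^ i

def digitWeight (p : ℕ) (d : ℕ →₀ ℕ) : ℕ :=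
  d.sum fun i a ↦ a * ∑ j ∈ Finset.range i, p ^ j

def baseDigits (p N : ℕ) : ℕ →₀ ℕ := (p.digits N).toFinsupp

theorem digitValue_eq_add_mul_shiftDown (d : ℕ →₀ ℕ) :
    digitValue p d = d 0 + p * digitValue p d.shiftDown := by
  rw [digitValue, sum_eq_add_sum_shiftDown d (fun i a ↦ a * p ^ i) fun _ ↦ zero_mul _,
    digitValue, mul_sum]
  simp only [pow_zero, mul_one, pow_succ]
  congr 1
  exact sum_congr fun _ _ ↦ by ring

theorem digitWeight_eq_add_shiftDown (d : ℕ →₀ ℕ) :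
    digitWeight p d = digitWeight p d.shiftDown + digitValue p d.shiftDown := by
  rw [digitWeight,
    sum_eq_add_sum_shiftDown d (fun i a ↦ a * ∑ j ∈ Finset.range i, p ^ j) fun _ ↦ zero_mul _,
    digitWeight, digitValue, ← Finsupp.sum_add]
  simp only [Finset.range_zero, Finset.sum_empty, mul_zero, zero_add, Finset.sum_range_succ,
    mul_add]

theorem apply_eq_digitValue_div_mod {d : ℕ →₀ ℕ} (hd : ∀ i, d i < p) (i : ℕ) :
    d i = digitValue p d / p ^ i % p := by
  induction i generalizing d with
  | zero =>
    rw [digitValue_eq_add_mul_shiftDown, pow_zero, Nat.div_one, Nat.add_mul_mod_self_left,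
      Nat.mod_eq_of_lt (hd 0)]
  | succ i ih =>
    have hp : 0 < p := (Nat.zero_le _).trans_lt (hd 0)
    have hdiv : digitValue p d.shiftDown = digitValue p d / p := by
      rw [digitValue_eq_add_mul_shiftDown d, Nat.add_mul_div_left _ _ hp,
        Nat.div_eq_of_lt (hd 0), zero_add]
    rw [← shiftDown_apply, ih fun j ↦ hd (j + 1), hdiv, Nat.div_div_eq_div_mul, pow_succ']

theorem baseDigits_apply (hp : 1 < p) (N i : ℕ) : baseDigits p N i = N / p ^ i % p := by
  rw [baseDigits, List.toFinsupp_apply, Nat.getD_digits _ _ hp]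

theorem shiftDown_baseDigits (hp : 1 < p) (N : ℕ) :
    (baseDigits p N).shiftDown = baseDigits p (N / p) := by
  ext i
  rw [shiftDown_apply, baseDigits_apply hp, baseDigits_apply hp, Nat.div_div_eq_div_mul, pow_succ']

theorem baseDigits_zero : baseDigits p 0 = 0 := by
  simp [baseDigits]

theorem digitValue_baseDigits (hp : 1 < p) (N : ℕ) : digitValue p (baseDigits p N) = N := by
  induction N using Nat.strong_induction_on with
  | _ N ih =>
  rcases N.eq_zero_or_pos with rfl | hN
  · simp [baseDigits_zero, digitValue]
  rw [digitValue_eq_add_mul_shiftDown, shiftDown_baseDigits hp, ih _ (Nat.div_lt_self hN hp),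
    baseDigits_apply hp, pow_zero, Nat.div_one, Nat.mod_add_div]

theorem padicValNat_factorial_eq_digitWeight [hp : Fact p.Prime] (N : ℕ) :
    padicValNat p N ! = digitWeight p (baseDigits p N) := by
  induction N using Nat.strong_induction_on with
  | _ N ih =>
  rcases N.eq_zero_or_pos with rfl | hN
  · simp [baseDigits_zero, digitWeight]
  have h1 := hp.out.one_lt
  rw [digitWeight_eq_add_shiftDown, shiftDown_baseDigits h1, ← ih _ (Nat.div_lt_self hN h1),
    digitValue_baseDigits h1, ← padicValNat_factorial_mul,
    ← padicValNat_factorial_mul_add (N / p) (Nat.mod_lt N hp.out.pos), Nat.div_add_mod]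

def digitEquiv (hp : 1 < p) : {d : ℕ →₀ ℕ // ∀ i, d i < p} ≃ ℕ where
  toFun d := digitValue p d
  invFun N := ⟨baseDigits p N, fun i ↦ by
    rw [baseDigits_apply hp]; exact Nat.mod_lt _ (by omega)⟩
  left_inv d := Subtype.ext <| Finsupp.ext fun i ↦ by
    rw [baseDigits_apply hp, ← apply_eq_digitValue_div_mod d.2]
  right_inv := digitValue_baseDigits hp

end Digits

section LeadingTerms

variable {p : ℕ}

theorem natDegree_lt_natDegree_pow (hp : 1 < p) {g : ℚ[X]} (hg : 0 < g.natDegree) :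
    g.natDegree < (g ^ p).natDegree := by
  rw [natDegree_pow]
  exact lt_mul_left hg hp

theorem natDegree_deltaOp (hp : 1 < p) {g : ℚ[X]} (hg : 0 < g.natDegree) :
    (deltaOp p g).natDegree = p * g.natDegree := by
  rw [deltaOp, smul_eq_C_mul, natDegree_C_mul (by positivity),
    natDegree_sub_eq_right_of_natDegree_lt (natDegree_lt_natDegree_pow hp hg), natDegree_pow]

theorem leadingCoeff_deltaOp (hp : 1 < p) {g : ℚ[X]} (hg : 0 < g.natDegree) :
    (deltaOp p g).leadingCoeff = -g.leadingCoeff ^ p / p := by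
  rw [deltaOp, smul_eq_C_mul, leadingCoeff_mul, leadingCoeff_C,
    leadingCoeff_sub_of_degree_lt' (degree_lt_degree (natDegree_lt_natDegree_pow hp hg)),
    leadingCoeff_pow]
  ring

theorem natDegree_deltaOp_iterate_X (hp : 1 < p) (i : ℕ) :
    ((deltaOp p)^[i] X).natDegree = p ^ i := by
  induction i with
  | zero => simp
  | succ i ih =>
    rw [Function.iterate_succ_apply', natDegree_deltaOp hp (ih ▸ by positivity), ih, pow_succ']

theorem leadingCoeff_deltaOp_iterate_X (hp : 1 < p) (i : ℕ) :
    ∃ u : ℤˣ, ((deltaOp p)^[i] X).leadingCoeff * p ^ (∑ j ∈ Finset.range i, p ^ j) = u := by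
  induction i with
  | zero => exact ⟨1, by simp⟩
  | succ i ih =>
    obtain ⟨u, hu⟩ := ih
    refine ⟨-u ^ p, ?_⟩
    have he : ∑ j ∈ Finset.range (i + 1), p ^ j = (∑ j ∈ Finset.range i, p ^ j) * p + 1 := by
      rw [Finset.sum_range_succ', Finset.sum_mul]
      simp [pow_succ]
    have hp0 : (p : ℚ) ≠ 0 := by positivity
    rw [Function.iterate_succ_apply', leadingCoeff_deltaOp hp
      (by rw [natDegree_deltaOp_iterate_X hp]; positivity), he, pow_add, pow_mul]
    push_cast
    rw [← hu]
    field_simp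
    ring

theorem deltaOp_iterate_X_ne_zero (hp : 1 < p) (i : ℕ) : (deltaOp p)^[i] X ≠ 0 := fun h ↦ by
  have := natDegree_deltaOp_iterate_X hp i
  rw [h, natDegree_zero] at this
  exact (pow_pos (by omega) i).ne' this.symm

theorem deltaMonomial_ne_zero (hp : 1 < p) (d : ℕ →₀ ℕ) : deltaMonomial p d ≠ 0 :=
  Finset.prod_ne_zero_iff.2 fun i _ ↦ pow_ne_zero _ (deltaOp_iterate_X_ne_zero hp i)

theorem natDegree_deltaMonomial (hp : 1 < p) (d : ℕ →₀ ℕ) :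
    (deltaMonomial p d).natDegree = digitValue p d := by
  rw [deltaMonomial, Finsupp.prod,
    natDegree_prod _ _ fun i _ ↦ pow_ne_zero _ (deltaOp_iterate_X_ne_zero hp i)]
  exact Finset.sum_congr rfl fun i _ ↦ by rw [natDegree_pow, natDegree_deltaOp_iterate_X hp]

theorem leadingCoeff_deltaMonomial (hp : 1 < p) (d : ℕ →₀ ℕ) :
    ∃ u : ℤˣ, (deltaMonomial p d).leadingCoeff * p ^ digitWeight p d = u := by
  choose u hu using leadingCoeff_deltaOp_iterate_X hp
  refine ⟨d.prod fun i a ↦ u i ^ a, ?_⟩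
  rw [deltaMonomial, Finsupp.prod, Finsupp.prod, leadingCoeff_prod, digitWeight, Finsupp.sum,
    ← Finset.prod_pow_eq_pow_sum, ← Finset.prod_mul_distrib]
  push_cast
  refine Finset.prod_congr rfl fun i _ ↦ ?_
  rw [leadingCoeff_pow, ← hu, mul_pow, ← pow_mul, mul_comm (d i)]

end LeadingTerms

section Localization

variable (p : ℕ) [hp : Fact p.Prime]

def zLoc : Subring ℚ where
  carrier := {x | memZLoc p x}
  mul_mem' := by
    rintro x y ⟨a, b, hb, hx⟩ ⟨a', b', hb', hy⟩
    refine ⟨a * a', b * b', (Nat.prime_iff_prime_int.1 hp.out).not_dvd_mul hb hb', ?_⟩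
    push_cast
    linear_combination y * b' * hx + a * hy
  add_mem' := by
    rintro x y ⟨a, b, hb, hx⟩ ⟨a', b', hb', hy⟩
    refine ⟨a * b' + a' * b, b * b', (Nat.prime_iff_prime_int.1 hp.out).not_dvd_mul hb hb', ?_⟩
    push_cast
    linear_combination b' * hx + b * hy
  neg_mem' := by
    rintro x ⟨a, b, hb, hx⟩
    exact ⟨-a, b, hb, by push_cast; linear_combination -hx⟩
  one_mem' := ⟨1, 1, by exact_mod_cast hp.out.not_dvd_one, by simp⟩
  zero_mem' := ⟨0, 1, by exact_mod_cast hp.out.not_dvd_one, by simp⟩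

def intLoc : Subring ℚ[X] where
  carrier := {f | memIntLoc p f}
  mul_mem' := by
    rintro f g ⟨n, hn, hf⟩ ⟨n', hn', hg⟩
    refine ⟨n * n', (Nat.prime_iff_prime_int.1 hp.out).not_dvd_mul hn hn', fun m ↦ ?_⟩
    obtain ⟨k, hk⟩ := hf m
    obtain ⟨k', hk'⟩ := hg m
    exact ⟨k * k', by push_cast; rw [eval_mul, ← hk, ← hk']; ring⟩
  add_mem' := by
    rintro f g ⟨n, hn, hf⟩ ⟨n', hn', hg⟩
    refine ⟨n * n', (Nat.prime_iff_prime_int.1 hp.out).not_dvd_mul hn hn', fun m ↦ ?_⟩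
    obtain ⟨k, hk⟩ := hf m
    obtain ⟨k', hk'⟩ := hg m
    exact ⟨n' * k + n * k', by push_cast; rw [eval_add, ← hk, ← hk']; ring⟩
  neg_mem' := by
    rintro f ⟨n, hn, hf⟩
    refine ⟨n, hn, fun m ↦ ?_⟩
    obtain ⟨k, hk⟩ := hf m
    exact ⟨-k, by push_cast; rw [eval_neg, ← hk]; ring⟩
  one_mem' := ⟨1, by exact_mod_cast hp.out.not_dvd_one, fun _ ↦ ⟨1, by simp⟩⟩
  zero_mem' := ⟨1, by exact_mod_cast hp.out.not_dvd_one, fun _ ↦ ⟨0, by simp⟩⟩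

variable {p}

theorem X_mem_intLoc : X ∈ intLoc p :=
  ⟨1, by exact_mod_cast hp.out.not_dvd_one, fun m ↦ ⟨m, by simp⟩⟩

theorem C_mem_intLoc {a : ℚ} (ha : a ∈ zLoc p) : C a ∈ intLoc p := by
  obtain ⟨a', b, hb, ha⟩ := ha
  exact ⟨b, hb, fun _ ↦ ⟨a', by rw [eval_C, ha]⟩⟩

theorem deltaOp_mem_intLoc {f : ℚ[X]} (hf : f ∈ intLoc p) : deltaOp p f ∈ intLoc p := by
  obtain ⟨n, hn, hf⟩ := hf
  refine ⟨n ^ p, fun h ↦ hn (Int.Prime.dvd_pow' hp.out h), fun m ↦ ?_⟩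
  obtain ⟨k, hk⟩ := hf m
  -- `n^p · δ f (m) = (n^(p-1) k - k^p) / p`, and Fermat makes the numerator divisible by `p`.
  obtain ⟨l, hl⟩ : (p : ℤ) ∣ n ^ (p - 1) * k - k ^ p := by
    rw [← ZMod.intCast_zmod_eq_zero_iff_dvd]
    have hn' : (n : ZMod p) ≠ 0 := by rwa [Ne, ZMod.intCast_zmod_eq_zero_iff_dvd]
    push_cast
    rw [ZMod.pow_card_sub_one_eq_one hn', ZMod.pow_card, one_mul, sub_self]
  refine ⟨l, ?_⟩
  have hp0 : (p : ℚ) ≠ 0 := Nat.cast_ne_zero.2 hp.out.ne_zero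
  have hnp : (n : ℚ) ^ p = n ^ (p - 1) * n := by
    rw [← pow_succ, Nat.sub_add_cancel hp.out.one_le]
  have hl' : (n : ℚ) ^ (p - 1) * k - (k : ℚ) ^ p = p * l := by exact_mod_cast hl
  have key : (n : ℚ) ^ p * (f.eval (m : ℚ) - f.eval (m : ℚ) ^ p) = p * l := by
    rw [← hl', ← hk, mul_pow]
    linear_combination f.eval (m : ℚ) * hnp
  rw [deltaOp, eval_smul, smul_eq_mul, eval_sub, eval_pow]
  push_cast
  field_simp
  linear_combination key

theorem deltaOp_iterate_X_mem_intLoc (i : ℕ) : (deltaOp p)^[i] X ∈ intLoc p := by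
  induction i with
  | zero => exact X_mem_intLoc
  | succ i ih => rw [Function.iterate_succ_apply']; exact deltaOp_mem_intLoc ih

theorem deltaMonomial_mem_intLoc (d : ℕ →₀ ℕ) : deltaMonomial p d ∈ intLoc p :=
  Subring.prod_mem _ fun i _ ↦ Subring.pow_mem _ (deltaOp_iterate_X_mem_intLoc i) _

theorem factorial_mul_leadingCoeff_mem_zLoc {f : ℚ[X]} (hf : f ∈ intLoc p) :
    (f.natDegree ! : ℚ) * f.leadingCoeff ∈ zLoc p := by
  obtain ⟨n, hn, hf⟩ := hf
  -- `Δ^N f (0) = N! · lc f` is a `ℤ`-combination of the values `f 0, …, f N`.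
  have hsum := congrFun f.fwdDiff_iter_degree_eq_factorial 0
  rw [fwdDiff_iter_eq_sum_shift] at hsum
  have : (n : ℚ) * (f.natDegree ! * f.leadingCoeff) ∈ (⊥ : Subring ℚ) := by
    simp only [Pi.smul_apply, Pi.natCast_apply, smul_eq_mul, zero_add] at hsum
    rw [mul_comm (f.natDegree ! : ℚ), ← hsum, Finset.mul_sum]
    refine Subring.sum_mem _ fun j _ ↦ ?_
    obtain ⟨k, hk⟩ := hf j
    rw [mul_smul_comm]
    exact zsmul_mem (Subring.mem_bot.2 ⟨k, by simpa using hk.symm⟩) _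
  obtain ⟨k, hk⟩ := Subring.mem_bot.1 this
  exact ⟨k, n, hn, hk.symm⟩

theorem pow_div_factorial_mem_zLoc {N E : ℕ} (h : padicValNat p N ! ≤ E) :
    (p : ℚ) ^ E / N ! ∈ zLoc p := by
  rw [← Nat.factorization_def _ hp.out] at h
  set v := (N !).factorization p
  set b := ordCompl[p] N !
  have hN : (N ! : ℚ) = p ^ v * b := by
    exact_mod_cast (Nat.ordProj_mul_ordCompl_eq_self N ! p).symm
  have hb : ¬ p ∣ b := Nat.not_dvd_ordCompl hp.out N.factorial_ne_zero
  have hb0 : (b : ℚ) ≠ 0 := Nat.cast_ne_zero.2 fun h ↦ hb (h ▸ dvd_zero p)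
  have hp0 : (p : ℚ) ≠ 0 := Nat.cast_ne_zero.2 hp.out.ne_zero
  refine ⟨p ^ (E - v), b, by exact_mod_cast hb, ?_⟩
  rw [hN, ← Nat.sub_add_cancel h, pow_add, Nat.add_sub_cancel]
  push_cast
  field_simp

end Localization

section Basis

variable {p : ℕ}

theorem leadingCoeff_div_leadingCoeff_deltaMonomial_mem_zLoc [hp : Fact p.Prime] {f : ℚ[X]}
    (hf : f ∈ intLoc p) :
    f.leadingCoeff / (deltaMonomial p (baseDigits p f.natDegree)).leadingCoeff ∈ zLoc p := by
  obtain ⟨u, hu⟩ := leadingCoeff_deltaMonomial hp.out.one_lt (baseDigits p f.natDegree)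
  rw [← padicValNat_factorial_eq_digitWeight] at hu
  have hp0 : (p : ℚ) ≠ 0 := Nat.cast_ne_zero.2 hp.out.ne_zero
  have key : f.leadingCoeff / (deltaMonomial p (baseDigits p f.natDegree)).leadingCoeff =
      u * ((f.natDegree ! : ℚ) * f.leadingCoeff) *
        (p ^ padicValNat p f.natDegree ! / f.natDegree !) := by
    rw [eq_div_of_mul_eq (by positivity) hu]
    have hu2 : ((u : ℤ) : ℚ) * (u : ℤ) = 1 := by
      rw [← Int.cast_mul, ← Units.val_mul, Int.units_mul_self, Units.val_one, Int.cast_one]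
    field_simp
    linear_combination (-f.leadingCoeff) * hu2
  rw [key]
  exact mul_mem (mul_mem (intCast_mem _ _) (factorial_mul_leadingCoeff_mem_zLoc hf))
    (pow_div_factorial_mem_zLoc le_rfl)

theorem mem_span_deltaMonomial [hp : Fact p.Prime] {f : ℚ[X]} (hf : f ∈ intLoc p) :
    f ∈ Submodule.span (zLoc p)
      (Set.range fun d : {d : ℕ →₀ ℕ // ∀ i, d i < p} ↦ deltaMonomial p d.1) := by
  refine mem_span_of_leadingCoeff_div_mem (zLoc p) (intLoc p).toAddSubgroup
    (fun r hr f hf ↦ (intLoc p).mul_mem (C_mem_intLoc hr) hf)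
    (fun d : {d : ℕ →₀ ℕ // ∀ i, d i < p} ↦ deltaMonomial p d.1)
    (fun d ↦ deltaMonomial_mem_intLoc d.1) (fun f hf _ ↦ ?_) hf
  have h1 := hp.out.one_lt
  exact ⟨(digitEquiv h1).symm f.natDegree, deltaMonomial_ne_zero h1 _,
    (natDegree_deltaMonomial h1 _).trans (digitValue_baseDigits h1 _),
    leadingCoeff_div_leadingCoeff_deltaMonomial_mem_zLoc hf⟩

theorem linearIndependent_deltaMonomial (hp : 1 < p) :
    LinearIndependent ℚ fun d : {d : ℕ →₀ ℕ // ∀ i, d i < p} ↦ deltaMonomial p d.1 :=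
  linearIndependent_of_natDegree_eq _ (digitEquiv hp) (fun d ↦ deltaMonomial_ne_zero hp d.1)
    fun d ↦ natDegree_deltaMonomial hp d.1

end Basis

/-- the monomials ∏ᵢ (δ^i(u))^{dᵢ} with 0 ≤ dᵢ < p (almost all zero)
lie in Int_(p) and form a basis of the ℤ_(p)-module Int_(p): every element has a
unique representation as a ℤ_(p)-linear combination of them. -/
theorem stmt4 (p : ℕ) (hp : p.Prime) :
    (∀ d : {d : ℕ →₀ ℕ // ∀ i, d i < p}, memIntLoc p (deltaMonomial p d.1)) ∧
    ∀ f : Polynomial ℚ, memIntLoc p f →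
      ∃! c : {d : ℕ →₀ ℕ // ∀ i, d i < p} →₀ ℚ,
        (∀ d, memZLoc p (c d)) ∧
        f = c.sum fun d a => Polynomial.C a * deltaMonomial p d.1 := by
  have := Fact.mk hp
  refine ⟨fun d ↦ deltaMonomial_mem_intLoc d.1, fun f hf ↦ ?_⟩
  simp only [← smul_eq_C_mul]
  obtain ⟨c, hc, rfl⟩ :=
    Submodule.exists_finsupp_of_mem_span_range _ _ (mem_span_deltaMonomial hf)
  refine ⟨c, ⟨hc, rfl⟩, fun c' ⟨_, hc'⟩ ↦ linearIndependent_deltaMonomial hp.one_lt ?_⟩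
  simpa [Finsupp.linearCombination_apply] using hc'.symm
end

section
/- Let A = ℤ_p[x]/(x^p − 1) and let I = (x − 1) ⊂ A be the augmentation ideal. Then for every f ∈ I one has f^p ∈ p·I. In particular, Spec A (the scheme μ_p over ℤ_p) is a divided-power thickening of its unit section. -/
open Polynomial

/-- A = ℤ_p[x]/(x^p − 1), the coordinate ring of μ_p over ℤ_p. -/
noncomputable abbrev MuRing (p : ℕ) [Fact p.Prime] :=
  Polynomial (PadicInt p) ⧸
    Ideal.span {(Polynomial.X : Polynomial (PadicInt p)) ^ p - 1}

lemma aux_key (p : ℕ) [Fact p.Prime] :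
    ∃ h : Polynomial (PadicInt p),
      (X - 1 : Polynomial (PadicInt p)) ^ p
        = (X ^ p - 1) + C (p : PadicInt p) * ((X - 1) * h) := by
  set q : Polynomial (PadicInt p) := (X - 1) ^ p - (X ^ p - 1) with hq
  have hmap : q.map (PadicInt.toZMod (p := p)) = 0 := by
    have : ((X - 1 : Polynomial (ZMod p)) ^ p) = X ^ p - 1 := by
      rw [sub_pow_char]; simp
    simp [hq, Polynomial.map_sub, Polynomial.map_pow, this]
  have hdvd : C ((p : PadicInt p)) ∣ q := by
    rw [Polynomial.C_dvd_iff_dvd_coeff]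
    intro n
    have h0 : (PadicInt.toZMod (q.coeff n)) = 0 := by
      have := congrArg (fun r => r.coeff n) hmap
      simpa [Polynomial.coeff_map] using this
    have : q.coeff n ∈ RingHom.ker (PadicInt.toZMod (p := p)) := h0
    rw [PadicInt.ker_toZMod, PadicInt.maximalIdeal_eq_span_p,
      Ideal.mem_span_singleton] at this
    exact this
  obtain ⟨h0, hh0⟩ := hdvd
  have heval : h0.eval 1 = 0 := by
    have hq1 : q.eval 1 = 0 := by simp [hq, (Fact.out (p := p.Prime)).ne_zero]
    rw [hh0] at hq1
    simp only [Polynomial.eval_mul, Polynomial.eval_C] at hq1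
    have hpne : ((p : PadicInt p)) ≠ 0 := by
      have := (Fact.out (p := p.Prime)).ne_zero
      exact_mod_cast this
    exact (mul_eq_zero.mp hq1).resolve_left hpne
  have hroot : (X - C (1 : PadicInt p)) ∣ h0 := by
    rw [Polynomial.dvd_iff_isRoot]; exact heval
  obtain ⟨h, hh⟩ := hroot
  refine ⟨h, ?_⟩
  have : (X - 1 : Polynomial (PadicInt p)) ^ p - (X ^ p - 1)
      = C (p : PadicInt p) * ((X - 1) * h) := by
    rw [← hq, hh0, hh]; simp [Polynomial.C_1]
  linear_combination this

/-- for the augmentation ideal I = (x − 1) ⊂ ℤ_p[x]/(x^p−1), every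
f ∈ I satisfies f^p ∈ p·I (so μ_p is a divided-power thickening of its unit). -/
theorem stmt5 (p : ℕ) [Fact p.Prime] (I : Ideal (MuRing p))
    (hI : I = Ideal.span
      {Ideal.Quotient.mk
        (Ideal.span {(Polynomial.X : Polynomial (PadicInt p)) ^ p - 1})
        ((Polynomial.X : Polynomial (PadicInt p)) - 1)}) :
    ∀ f ∈ I, ∃ g ∈ I, f ^ p = (p : MuRing p) * g := by
  intro f hf
  set J := Ideal.span {(Polynomial.X : Polynomial (PadicInt p)) ^ p - 1}
  set π := Ideal.Quotient.mk J
  set t : MuRing p := π ((Polynomial.X : Polynomial (PadicInt p)) - 1)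
  rw [hI, Ideal.mem_span_singleton'] at hf
  obtain ⟨a, ha⟩ := hf
  obtain ⟨h, hh⟩ := aux_key p
  have hXp : π ((X : Polynomial (PadicInt p)) ^ p - 1) = 0 := by
    exact Ideal.Quotient.eq_zero_iff_mem.2 (Ideal.subset_span rfl)
  have hCp : π (C (p : PadicInt p)) = (p : MuRing p) := by
    simp [π, map_natCast]
  have ht : t ^ p = (p : MuRing p) * (t * π h) := by
    have := congrArg π hh
    rw [map_add, map_pow, map_mul, map_mul, hXp, hCp] at this
    simpa [t, map_sub] using this
  refine ⟨a ^ p * (π h) * t, ?_, ?_⟩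
  · rw [hI]
    exact Ideal.mul_mem_left _ _ (Ideal.subset_span rfl)
  · rw [← ha, mul_pow, ht]; ring
end

section
/- Let B₀ ⊂ ℚ[h,t] be the ℤ[h]-subalgebra generated by the polynomials b_n(t,h) := t(t−h)(t−2h)⋯(t−(n−1)h)/n! for n ≥ 0. Then the b_n (n ≥ 0) form a basis of B₀ as a ℤ[h]-module. -/
open Polynomial

/-- h, viewed inside ℚ[h][t] = Polynomial (Polynomial ℚ). -/
noncomputable def hB : Polynomial (Polynomial ℚ) := Polynomial.C Polynomial.X

/-- t, viewed inside ℚ[h][t]. -/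
noncomputable def tB : Polynomial (Polynomial ℚ) := Polynomial.X

/-- b_n(t,h) = t(t−h)⋯(t−(n−1)h)/n!. -/
noncomputable def bpoly (n : ℕ) : Polynomial (Polynomial ℚ) :=
  Polynomial.C (Polynomial.C ((n.factorial : ℚ)⁻¹)) *
    ∏ i ∈ Finset.range n, (tB - (i : Polynomial (Polynomial ℚ)) * hB)

/-- the image of ℤ[h] inside ℚ[h][t]. -/
noncomputable def intH (g : Polynomial ℤ) : Polynomial (Polynomial ℚ) :=
  Polynomial.C (g.map (Int.castRingHom ℚ))

open Finset in
section
noncomputable def fac (i : ℕ) : Polynomial (Polynomial ℚ) :=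
  Polynomial.X - Polynomial.C (Polynomial.C (i : ℚ) * Polynomial.X)

lemma bpoly_eq (n : ℕ) :
    bpoly n = Polynomial.C (Polynomial.C ((n.factorial : ℚ)⁻¹)) * ∏ i ∈ Finset.range n, fac i := by
  unfold bpoly fac tB hB
  congr 1
  refine Finset.prod_congr rfl fun i _ => ?_
  rw [← Polynomial.C_eq_natCast, ← Polynomial.C_mul]
  norm_cast

lemma fac_monic (i : ℕ) : (fac i).Monic := Polynomial.monic_X_sub_C _

lemma prod_fac_monic (n : ℕ) : (∏ i ∈ Finset.range n, fac i).Monic :=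
  Polynomial.monic_prod_of_monic _ _ fun i _ => fac_monic i

lemma prod_fac_natDegree (n : ℕ) : (∏ i ∈ Finset.range n, fac i).natDegree = n := by
  rw [Polynomial.natDegree_prod_of_monic _ _ fun i _ => fac_monic i]
  simp only [fac, Polynomial.natDegree_X_sub_C]
  simp

lemma bpoly_coeff_self (n : ℕ) : (bpoly n).coeff n = Polynomial.C ((n.factorial : ℚ)⁻¹) := by
  rw [bpoly_eq, Polynomial.coeff_C_mul]
  have h := (prod_fac_monic n).leadingCoeff
  rw [Polynomial.leadingCoeff, prod_fac_natDegree] at h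
  rw [h, mul_one]

lemma bpoly_coeff_of_lt {m n : ℕ} (h : n < m) : (bpoly n).coeff m = 0 := by
  rw [bpoly_eq, Polynomial.coeff_C_mul,
    Polynomial.coeff_eq_zero_of_natDegree_lt (by rw [prod_fac_natDegree]; exact h), mul_zero]

lemma bpoly_natDegree (n : ℕ) : (bpoly n).natDegree = n := by
  have h1 : (bpoly n).coeff n ≠ 0 := by
    rw [bpoly_coeff_self]
    simp [Polynomial.C_eq_zero, Nat.factorial_ne_zero]
  have h2 : (bpoly n).natDegree ≤ n := by
    rw [Polynomial.natDegree_le_iff_coeff_eq_zero]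
    exact fun m hm => bpoly_coeff_of_lt hm
  exact le_antisymm h2 (Polynomial.le_natDegree_of_ne_zero h1)

lemma bpoly_zero : bpoly 0 = 1 := by simp [bpoly]
-- ℚ[h]-expansion
lemma expand : ∀ (N : ℕ) (f : Polynomial (Polynomial ℚ)), f.natDegree ≤ N →
    ∃ q : ℕ → Polynomial ℚ, f = ∑ n ∈ Finset.range (N + 1), Polynomial.C (q n) * bpoly n := by
  intro N
  induction N with
  | zero =>
    intro f hf
    exact ⟨fun _ => f.coeff 0, by
      simp [bpoly_zero, ← Polynomial.eq_C_of_natDegree_le_zero hf]⟩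
  | succ N ih =>
    intro f hf
    set a : Polynomial ℚ := Polynomial.C (((N + 1).factorial : ℚ)) * f.coeff (N + 1) with ha
    set g := f - Polynomial.C a * bpoly (N + 1) with hgdef
    have hcoeff : g.coeff (N + 1) = 0 := by
      rw [hgdef, Polynomial.coeff_sub, Polynomial.coeff_C_mul, bpoly_coeff_self, ha]
      rw [mul_comm (Polynomial.C (((N + 1).factorial : ℚ))) (f.coeff (N+1)), mul_assoc,
        ← Polynomial.C_mul, mul_inv_cancel₀ (by exact_mod_cast (N+1).factorial_ne_zero), Polynomial.C_1,
        mul_one, sub_self]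
    have hdeg : g.natDegree ≤ N := by
      rw [Polynomial.natDegree_le_iff_coeff_eq_zero]
      intro m hm
      rcases Nat.lt_or_ge (N + 1) m with h' | h'
      · rw [hgdef, Polynomial.coeff_sub, Polynomial.coeff_C_mul, bpoly_coeff_of_lt h',
          Polynomial.coeff_eq_zero_of_natDegree_lt (lt_of_le_of_lt hf h'), mul_zero, sub_self]
      · have : m = N + 1 := le_antisymm h' hm
        rw [this]; exact hcoeff
    obtain ⟨q, hq⟩ := ih g hdeg
    refine ⟨fun n => if n = N + 1 then a else q n, ?_⟩
    have hsum : ∑ n ∈ Finset.range (N + 1 + 1), Polynomial.C (if n = N + 1 then a else q n) * bpoly n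
        = (∑ n ∈ Finset.range (N + 1), Polynomial.C (q n) * bpoly n)
          + Polynomial.C a * bpoly (N + 1) := by
      rw [Finset.sum_range_succ, if_pos rfl]
      congr 1
      refine Finset.sum_congr rfl fun n hn => ?_
      have := Finset.mem_range.mp hn
      rw [if_neg (by omega)]
    simp only []
    rw [hsum, ← hq, hgdef]
    ring

-- shift and difference
noncomputable def sh : Polynomial (Polynomial ℚ) := Polynomial.X + Polynomial.C Polynomial.X

lemma fac_comp (i : ℕ) : (fac (i + 1)).comp sh = fac i := by
  unfold fac sh
  rw [Polynomial.sub_comp, Polynomial.X_comp, Polynomial.C_comp]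
  push_cast
  rw [Polynomial.C_add, Polynomial.C_1, add_mul, one_mul, Polynomial.C_add]
  ring

lemma fac_zero_comp : (fac 0).comp sh = sh := by
  unfold fac sh
  simp

lemma prod_fac_comp (n : ℕ) :
    (∏ i ∈ Finset.range (n + 1), fac i).comp sh = sh * ∏ i ∈ Finset.range n, fac i := by
  rw [Polynomial.prod_comp, Finset.prod_range_succ']
  rw [fac_zero_comp]
  rw [Finset.prod_congr rfl fun i _ => fac_comp i]
  ring

lemma delta_bpoly (n : ℕ) :
    (bpoly (n + 1)).comp sh = bpoly (n + 1) + Polynomial.C Polynomial.X * bpoly n := by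
  have key : ((n + 1).factorial : ℚ)⁻¹ + ((n + 1).factorial : ℚ)⁻¹ * n = (n.factorial : ℚ)⁻¹ := by
    rw [Nat.factorial_succ]
    have h0 : (n.factorial : ℚ) ≠ 0 := by exact_mod_cast n.factorial_ne_zero
    have h1 : ((n : ℚ) + 1) ≠ 0 := by positivity
    push_cast
    field_simp
    try ring
    try simp [Nat.factorial_ne_zero]
  have h : Polynomial.C (Polynomial.C (((n + 1).factorial : ℚ)⁻¹)) * sh
      = Polynomial.C (Polynomial.C (((n + 1).factorial : ℚ)⁻¹)) * fac n
        + Polynomial.C (Polynomial.X : Polynomial ℚ) *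
          Polynomial.C (Polynomial.C ((n.factorial : ℚ)⁻¹)) := by
    have hc : (Polynomial.C ((n.factorial : ℚ)⁻¹) : Polynomial ℚ)
        = Polynomial.C (((n + 1).factorial : ℚ)⁻¹)
          + Polynomial.C (((n + 1).factorial : ℚ)⁻¹) * Polynomial.C (n : ℚ) := by
      rw [← Polynomial.C_mul, ← Polynomial.C_add, key]
    rw [hc]
    unfold sh fac
    simp only [Polynomial.C_add, Polynomial.C_mul]
    ring
  rw [bpoly_eq (n + 1), Polynomial.mul_comp, Polynomial.C_comp, prod_fac_comp,
    Finset.prod_range_succ, bpoly_eq n]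
  linear_combination (∏ i ∈ Finset.range n, fac i) * h

noncomputable def Rint : Subring (Polynomial ℚ) := (Polynomial.mapRingHom (Int.castRingHom ℚ)).range

noncomputable def ev (j : ℕ) : Polynomial (Polynomial ℚ) →+* Polynomial ℚ :=
  Polynomial.evalRingHom (Polynomial.C (j : ℚ) * Polynomial.X)

lemma hdvd {p : Polynomial ℚ} (h : Polynomial.X * p ∈ Rint) : p ∈ Rint := by
  have h' := (Polynomial.mem_map_range (Int.castRingHom ℚ)).mp h
  refine (Polynomial.mem_map_range (Int.castRingHom ℚ)).mpr fun n => ?_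
  have := h' (n + 1)
  rwa [Polynomial.coeff_X_mul] at this

lemma cast_desc (j n : ℕ) : ∏ i ∈ Finset.range n, ((j : ℚ) - i) = (j.descFactorial n : ℚ) := by
  induction n with
  | zero => simp
  | succ n ih =>
    rw [Finset.prod_range_succ, ih, Nat.descFactorial_succ]
    by_cases hle : n ≤ j
    · rw [Nat.cast_mul, Nat.cast_sub hle]
      ring
    · push_neg at hle
      rw [Nat.descFactorial_eq_zero_iff_lt.mpr hle]
      simp

lemma ev_bpoly (j n : ℕ) :
    ev j (bpoly n) = Polynomial.C ((j.choose n : ℚ)) * Polynomial.X ^ n := by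
  rw [bpoly_eq]
  unfold ev fac
  rw [map_mul, map_prod]
  simp only [Polynomial.coe_evalRingHom, Polynomial.eval_C, Polynomial.eval_sub,
    Polynomial.eval_X]
  have : ∀ i ∈ Finset.range n,
      Polynomial.C (j : ℚ) * Polynomial.X - Polynomial.C (i : ℚ) * Polynomial.X
        = Polynomial.C ((j : ℚ) - i) * Polynomial.X := by
    intro i _
    rw [Polynomial.C_sub]; ring
  rw [Finset.prod_congr rfl this, Finset.prod_mul_distrib, ← map_prod, cast_desc,
    Finset.prod_const, Finset.card_range]
  rw [← mul_assoc, ← Polynomial.C_mul]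
  congr 2
  rw [Nat.descFactorial_eq_factorial_mul_choose]
  push_cast
  rw [← mul_assoc, inv_mul_cancel₀ (by exact_mod_cast n.factorial_ne_zero : (n.factorial:ℚ) ≠ 0), one_mul]

lemma ev_intH (j : ℕ) (g : Polynomial ℤ) : ev j (intH g) = g.map (Int.castRingHom ℚ) := by
  unfold ev intH
  simp

lemma closure_ev {f : Polynomial (Polynomial ℚ)}
    (hf : f ∈ Subring.closure ((Set.range intH) ∪ (Set.range bpoly))) (j : ℕ) :
    ev j f ∈ Rint := by
  have hle : Subring.closure ((Set.range intH) ∪ (Set.range bpoly)) ≤ Rint.comap (ev j) := by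
    rw [Subring.closure_le]
    rintro x (⟨g, rfl⟩ | ⟨n, rfl⟩)
    · exact ⟨g, by rw [Polynomial.coe_mapRingHom, ← ev_intH j g]⟩
    · refine ⟨Polynomial.C ((j.choose n : ℤ)) * Polynomial.X ^ n, ?_⟩
      rw [Polynomial.coe_mapRingHom, ev_bpoly]
      simp
  exact hle hf
lemma ev_zero_sum (N : ℕ) (q : ℕ → Polynomial ℚ) :
    ev 0 (∑ n ∈ Finset.range (N + 1), Polynomial.C (q n) * bpoly n) = q 0 := by
  rw [map_sum, Finset.sum_eq_single 0]
  · rw [map_mul, ev_bpoly]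
    simp [ev]
  · intro n hn hne
    rw [map_mul, ev_bpoly, Nat.choose_eq_zero_of_lt (Nat.pos_of_ne_zero hne)]
    simp
  · intro h; exact absurd (Finset.mem_range.mpr (Nat.succ_pos N)) h

lemma ev_comp_sh (j : ℕ) (f : Polynomial (Polynomial ℚ)) :
    ev j (f.comp sh) = ev (j + 1) f := by
  unfold ev sh
  simp only [Polynomial.coe_evalRingHom, Polynomial.eval_comp, Polynomial.eval_add,
    Polynomial.eval_X, Polynomial.eval_C]
  congr 1
  push_cast
  rw [Polynomial.C_add, Polynomial.C_1]
  ring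

lemma delta_sum (N : ℕ) (q : ℕ → Polynomial ℚ) :
    (∑ n ∈ Finset.range (N + 1 + 1), Polynomial.C (q n) * bpoly n).comp sh
      - ∑ n ∈ Finset.range (N + 1 + 1), Polynomial.C (q n) * bpoly n
    = ∑ n ∈ Finset.range (N + 1), Polynomial.C (Polynomial.X * q (n + 1)) * bpoly n := by
  rw [Polynomial.sum_comp, ← Finset.sum_sub_distrib]
  have : ∀ n, (Polynomial.C (q n) * bpoly n).comp sh - Polynomial.C (q n) * bpoly n
      = Polynomial.C (q n) * ((bpoly n).comp sh - bpoly n) := by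
    intro n
    rw [Polynomial.mul_comp, Polynomial.C_comp]
    ring
  rw [Finset.sum_congr rfl fun n _ => this n, Finset.sum_range_succ']
  have h0 : Polynomial.C (q 0) * ((bpoly 0).comp sh - bpoly 0) = 0 := by
    rw [bpoly_zero, Polynomial.one_comp]
    simp
  rw [h0, add_zero]
  refine Finset.sum_congr rfl fun n _ => ?_
  rw [delta_bpoly, Polynomial.C_mul]
  ring

lemma key_ind : ∀ (N : ℕ) (q : ℕ → Polynomial ℚ),
    (∀ j : ℕ, ev j (∑ n ∈ Finset.range (N + 1), Polynomial.C (q n) * bpoly n) ∈ Rint) →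
    ∀ n, n ≤ N → q n ∈ Rint := by
  intro N
  induction N with
  | zero =>
    intro q hq n hn
    obtain rfl : n = 0 := Nat.le_zero.mp hn
    have := hq 0
    rwa [ev_zero_sum] at this
  | succ N ih =>
    intro q hq n hn
    have h0 : q 0 ∈ Rint := by
      have := hq 0
      rwa [ev_zero_sum] at this
    have hq' : ∀ j : ℕ, ev j (∑ n ∈ Finset.range (N + 1),
        Polynomial.C (Polynomial.X * q (n + 1)) * bpoly n) ∈ Rint := by
      intro j
      rw [← delta_sum N q, map_sub, ev_comp_sh]
      exact Subring.sub_mem _ (hq (j + 1)) (hq j)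
    have hmid := ih _ hq'
    cases n with
    | zero => exact h0
    | succ n => exact hdvd (hmid n (by omega))

-- linear independence over ℚ[h]
lemma sum_eq_zero {q : ℕ →₀ Polynomial ℚ}
    (h : (q.sum fun n g => Polynomial.C g * bpoly n) = 0) : q = 0 := by
  by_contra hne
  have hsupp : q.support.Nonempty := Finsupp.support_nonempty_iff.mpr hne
  set m := q.support.max' hsupp with hm
  have hqm : q m ≠ 0 := Finsupp.mem_support_iff.mp (q.support.max'_mem hsupp)
  have hco : (q.sum fun n g => Polynomial.C g * bpoly n).coeff m
      = q m * Polynomial.C ((m.factorial : ℚ)⁻¹) := by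
    rw [Finsupp.sum, Polynomial.finset_sum_coeff, Finset.sum_eq_single m]
    · rw [Polynomial.coeff_C_mul, bpoly_coeff_self]
    · intro n hn hne'
      have hle : n ≤ m := Finset.le_max' _ _ hn
      rw [Polynomial.coeff_C_mul, bpoly_coeff_of_lt (lt_of_le_of_ne hle hne'), mul_zero]
    · intro hmem
      exact absurd (q.support.max'_mem hsupp) hmem
  rw [h, Polynomial.coeff_zero] at hco
  have hC : (Polynomial.C ((m.factorial : ℚ)⁻¹) : Polynomial ℚ) ≠ 0 := by
    simp [Polynomial.C_eq_zero, Nat.factorial_ne_zero]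
  exact hqm (by rcases mul_eq_zero.mp hco.symm with h' | h'; exact h'; exact absurd h' hC)
lemma sumF_injective {c₁ c₂ : ℕ →₀ Polynomial ℤ}
    (h : (c₁.sum fun n g => intH g * bpoly n) = c₂.sum fun n g => intH g * bpoly n) :
    c₁ = c₂ := by
  have hsub : ((c₁ - c₂).sum fun n g => intH g * bpoly n) = 0 := by
    rw [Finsupp.sum_sub_index]
    · rw [h, sub_self]
    · intro a b₁ b₂
      unfold intH
      rw [Polynomial.map_sub, Polynomial.C_sub, sub_mul]
  set d := c₁ - c₂ with hd
  set q : ℕ →₀ Polynomial ℚ :=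
    d.mapRange (Polynomial.map (Int.castRingHom ℚ)) (Polynomial.map_zero _) with hqdef
  have hq : (q.sum fun n g => Polynomial.C g * bpoly n) = 0 := by
    rw [hqdef, Finsupp.sum_mapRange_index (fun a => by simp)]
    exact hsub
  have hq0 := sum_eq_zero hq
  have hdz : d = 0 := by
    ext n k
    have h1 : q n = 0 := by rw [hq0]; rfl
    rw [hqdef, Finsupp.mapRange_apply] at h1
    have h2 : Polynomial.map (Int.castRingHom ℚ) (d n) = Polynomial.map (Int.castRingHom ℚ) 0 := by
      rw [Polynomial.map_zero]; exact h1
    have h3 : d n = 0 := Polynomial.map_injective (Int.castRingHom ℚ) Int.cast_injective h2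
    simp [h3]
  have := sub_eq_zero.mp (hd ▸ hdz)
  exact this

/-- the b_n form a ℤ[h]-basis of the ℤ[h]-subalgebra B₀ ⊂ ℚ[h,t]
they generate: every element of B₀ is uniquely a ℤ[h]-linear combination of the b_n. -/
theorem stmt10 :
    ∀ f ∈ Subring.closure ((Set.range intH) ∪ (Set.range bpoly)),
      ∃! c : ℕ →₀ Polynomial ℤ,
        f = c.sum fun n g => intH g * bpoly n := by
  intro f hf
  obtain ⟨q, hq⟩ := expand f.natDegree f le_rfl
  have hint : ∀ n, n ≤ f.natDegree → q n ∈ Rint :=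
    key_ind f.natDegree q (fun j => by rw [← hq]; exact closure_ev hf j)
  have hchoice : ∀ n, ∃ g : Polynomial ℤ,
      (n ≤ f.natDegree → g.map (Int.castRingHom ℚ) = q n) := by
    intro n
    by_cases hn : n ≤ f.natDegree
    · obtain ⟨g, hg⟩ := hint n hn
      exact ⟨g, fun _ => hg⟩
    · exact ⟨0, fun h' => absurd h' hn⟩
  choose G hG using hchoice
  set G' : ℕ → Polynomial ℤ := fun n => if n ≤ f.natDegree then G n else 0 with hG'
  have hsupp : ∀ a : ℕ, G' a ≠ 0 → a ∈ Finset.range (f.natDegree + 1) := by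
    intro a ha
    refine Finset.mem_range_succ_iff.mpr ?_
    by_contra hc
    exact ha (by simp [hG', hc])
  set c : ℕ →₀ Polynomial ℤ := Finsupp.onFinset (Finset.range (f.natDegree + 1)) G' hsupp
    with hc
  have hceq : f = c.sum fun n g => intH g * bpoly n := by
    calc f = ∑ n ∈ Finset.range (f.natDegree + 1), Polynomial.C (q n) * bpoly n := hq
    _ = ∑ n ∈ Finset.range (f.natDegree + 1), intH (c n) * bpoly n := by
        refine Finset.sum_congr rfl fun n hn => ?_
        have hn' : n ≤ f.natDegree := Finset.mem_range_succ_iff.mp hn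
        have hcn : c n = G n := by simp [hc, hG', hn']
        rw [hcn]
        unfold intH
        rw [hG n hn']
    _ = ∑ n ∈ c.support, intH (c n) * bpoly n := by
        refine (Finset.sum_subset Finsupp.support_onFinset_subset fun x _ hnx => ?_).symm
        rw [Finsupp.notMem_support_iff.mp hnx]
        unfold intH
        simp
    _ = c.sum fun n g => intH g * bpoly n := rfl
  exact ⟨c, hceq, fun c' hc' => sumF_injective (by rw [← hc', ← hceq])⟩

end
end

section
/- For every positive integer m and every n ≥ 0, the polynomial mt(mt−h)(mt−2h)⋯(mt−(n−1)h)/n! lies in the ℤ[h]-span B₀ of the polynomials b_k(t,h) = t(t−h)⋯(t−(k−1)h)/k!; moreover, in B₀[[z]] one has Σ_{n≥0} (mt(mt−h)⋯(mt−(n−1)h)/n!) z^n = Σ_{n≥0} b_n(t,h) v^n z^n, where v = ((1+hz)^m − 1)/(hz) ∈ ℤ[h,z]. -/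
open Polynomial

/-- mt(mt−h)⋯(mt−(n−1)h)/n!. -/
noncomputable def mbpoly (m n : ℕ) : Polynomial (Polynomial ℚ) :=
  Polynomial.C (Polynomial.C ((n.factorial : ℚ)⁻¹)) *
    ∏ i ∈ Finset.range n,
      ((m : Polynomial (Polynomial ℚ)) * tB - (i : Polynomial (Polynomial ℚ)) * hB)

/-- the polynomial v = ((1+hz)^m − 1)/(hz) = Σ_{i=1}^m C(m,i) h^{i−1} z^{i−1},
as a power series in z over ℚ[h][t]. -/
noncomputable def vSeries (m : ℕ) : PowerSeries (Polynomial (Polynomial ℚ)) :=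
  PowerSeries.mk fun k =>
    if k + 1 ≤ m then (m.choose (k + 1) : Polynomial (Polynomial ℚ)) * hB ^ k else 0

/-!
Substituting `t = N h` turns `mt(mt−h)⋯(mt−(k−1)h)/k!` into `C(mN, k) h^k` and `b_n` into
`C(N, n) h^n`, and the points `(h, t) = (b, N b)` with `b ≠ 0` determine a polynomial in `ℚ[h, t]`.
So the identity reduces to comparing coefficients of `z^k` in `(1 + z)^(mN) = (1 + z v(1, z))^N`.
Since `v(h, z) = v(1, hz)`, the coefficient of `z^j` in `v^n` is an integer times `h^j`, which also
gives the membership in `B₀`.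
-/

/-- `v(1, z) = ((1 + z)^m − 1)/z`, the specialisation `h = 1` of `v`. -/
noncomputable def vPoly (m : ℕ) : ℤ[X] := divX ((X + 1) ^ m)

lemma X_mul_vPoly (m : ℕ) : X * vPoly m = (X + 1) ^ m - 1 := by
  have h := divX_mul_X_add ((X + 1 : ℤ[X]) ^ m)
  rw [coeff_X_add_one_pow, Nat.choose_zero_right, Nat.cast_one, map_one] at h
  rw [vPoly, mul_comm, eq_sub_iff_add_eq, h]

theorem choose_mul_eq_sum_coeff_vPoly_pow (m N k : ℕ) :
    ((m * N).choose k : ℤ) =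
      ∑ n ∈ Finset.range (k + 1), (vPoly m ^ n).coeff (k - n) * N.choose n := by
  set g : ℕ → ℤ := fun n => (if n ≤ k then (vPoly m ^ n).coeff (k - n) else 0) * N.choose n
  have hexp : (X + 1 : ℤ[X]) ^ (m * N) =
      ∑ n ∈ Finset.range (N + 1), X ^ n * vPoly m ^ n * (N.choose n : ℤ[X]) := by
    rw [pow_mul, ← sub_add_cancel ((X + 1 : ℤ[X]) ^ m) 1, ← X_mul_vPoly, add_pow]
    simp only [one_pow, mul_one, mul_pow]
  calc ((m * N).choose k : ℤ) = ∑ n ∈ Finset.range (N + 1), g n := by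
        rw [← coeff_X_add_one_pow, hexp, finsetSum_coeff]
        refine Finset.sum_congr rfl fun n _ => ?_
        rw [← C_eq_natCast, coeff_mul_C, coeff_X_pow_mul']
    _ = ∑ n ∈ Finset.range (N + k + 1), g n :=
        Finset.sum_subset (Finset.range_subset_range.mpr (by omega)) fun n _ hn => by
          simp only [g, Nat.choose_eq_zero_of_lt (by simpa using hn : N < n), Nat.cast_zero,
            mul_zero]
    _ = ∑ n ∈ Finset.range (k + 1), g n :=
        (Finset.sum_subset (Finset.range_subset_range.mpr (by omega)) fun n _ hn => by
          simp only [g, if_neg (by simpa using hn : ¬n ≤ k), zero_mul]).symm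
    _ = _ := Finset.sum_congr rfl fun n hn => by
        simp only [g, if_pos (Nat.lt_succ_iff.mp (Finset.mem_range.mp hn))]

section Bivariate

variable {R : Type*} [CommRing R]

theorem prod_range_natCast_mul_sub_mul (N k : ℕ) (b : R) :
    ∏ i ∈ Finset.range k, ((N : R) * b - i * b) = (k.factorial * N.choose k : ℕ) * b ^ k := by
  simp_rw [← sub_mul, Finset.prod_mul_distrib, Finset.prod_const, Finset.card_range,
    ← descPochhammer_eval_eq_prod_range, descPochhammer_eval_eq_descFactorial,
    Nat.descFactorial_eq_factorial_mul_choose]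

/-- On each of the infinitely many lines `h = b`, `b ≠ 0`, there are infinitely many points
`(b, N b)`. -/
theorem eq_of_evalEval_natCast_mul_eq [IsDomain R] [CharZero R] {p q : R[X][X]}
    (h : ∀ b : R, b ≠ 0 → ∀ N : ℕ, evalEval b (N * b) p = evalEval b (N * b) q) : p = q := by
  have hline : ∀ b : R, b ≠ 0 → p.map (evalRingHom b) = q.map (evalRingHom b) := fun b hb =>
    eq_of_infinite_eval_eq _ _ <|
      (Set.infinite_range_of_injective ((mul_left_injective₀ hb).comp Nat.cast_injective)).mono
        (by rintro _ ⟨N, rfl⟩; simpa [map_evalRingHom_eval] using h b hb N)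
  ext i : 1
  refine eq_of_infinite_eval_eq _ _ <| (Set.finite_singleton 0).infinite_compl.mono fun b hb => ?_
  simpa using congr_arg (coeff · i) (hline b hb)

end Bivariate

lemma evalEval_intH_monomial (b y : ℚ) (j : ℕ) (a : ℤ) :
    evalEval b y (intH (monomial j a)) = a * b ^ j := by
  simp [intH, evalEval_C]

lemma evalEval_bpoly (b : ℚ) (N n : ℕ) :
    evalEval b (N * b) (bpoly n) = N.choose n * b ^ n := by
  simp only [bpoly, tB, hB, evalEval_mul, evalEval_prod, evalEval_sub, evalEval_X,
    evalEval_natCast, evalEval_C, eval_C, eval_X, prod_range_natCast_mul_sub_mul]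
  field_simp
  push_cast
  ring

lemma evalEval_mbpoly (b : ℚ) (m N k : ℕ) :
    evalEval b (N * b) (mbpoly m k) = (m * N).choose k * b ^ k := by
  simp only [mbpoly, tB, hB, evalEval_mul, evalEval_prod, evalEval_sub, evalEval_X,
    evalEval_natCast, evalEval_C, eval_C, eval_X, ← mul_assoc, ← Nat.cast_mul,
    prod_range_natCast_mul_sub_mul]
  field_simp
  push_cast
  ring

theorem mbpoly_eq_sum (m k : ℕ) :
    mbpoly m k = ∑ n ∈ Finset.range (k + 1),
      intH (monomial (k - n) ((vPoly m ^ n).coeff (k - n))) * bpoly n := by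
  refine eq_of_evalEval_natCast_mul_eq fun b _ N => ?_
  simp only [evalEval_mbpoly, evalEval_finsetSum, evalEval_mul, evalEval_intH_monomial,
    evalEval_bpoly]
  rw [← Int.cast_natCast ((m * N).choose k), choose_mul_eq_sum_coeff_vPoly_pow, Int.cast_sum,
    Finset.sum_mul]
  refine Finset.sum_congr rfl fun n hn => ?_
  rw [← pow_sub_mul_pow b (Nat.lt_succ_iff.mp (Finset.mem_range.mp hn))]
  push_cast
  ring

lemma vSeries_eq_rescale (m : ℕ) :
    vSeries m =
      PowerSeries.rescale hB ((vPoly m).map (Int.castRingHom ℚ[X][X]) : PowerSeries ℚ[X][X]) := by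
  ext k
  rw [vSeries, PowerSeries.coeff_mk, PowerSeries.coeff_rescale, coeff_coe, coeff_map, vPoly,
    coeff_divX, coeff_X_add_one_pow]
  split_ifs with hk
  · simp [mul_comm]
  · simp [Nat.choose_eq_zero_of_lt (not_le.mp hk)]

lemma coeff_vSeries_pow (m n j : ℕ) :
    PowerSeries.coeff j (vSeries m ^ n) = intH (monomial j ((vPoly m ^ n).coeff j)) := by
  rw [vSeries_eq_rescale, ← map_pow, PowerSeries.coeff_rescale, ← coe_pow, ← Polynomial.map_pow,
    coeff_coe, coeff_map]
  simp [intH, hB, ← C_mul_X_pow_eq_monomial, mul_comm]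

theorem stmt12_general (m : ℕ) :
    (∀ n : ℕ, ∃ c : ℕ → Polynomial ℤ,
      mbpoly m n = ∑ k ∈ Finset.range (n + 1), intH (c k) * bpoly k) ∧
    (∀ k : ℕ,
      mbpoly m k =
        ∑ n ∈ Finset.range (k + 1),
          bpoly n * PowerSeries.coeff (k - n)
            ((vSeries m) ^ n)) := by
  refine ⟨fun n => ⟨_, mbpoly_eq_sum m n⟩, fun k => ?_⟩
  rw [mbpoly_eq_sum]
  simp_rw [coeff_vSeries_pow, mul_comm]

/-- each polynomial mt(mt−h)⋯(mt−(n−1)h)/n! lies in the ℤ[h]-span B₀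
of the b_k, and Σ_n (mt(mt−h)⋯(mt−(n−1)h)/n!) zⁿ = Σ_n b_n vⁿ zⁿ in B₀[[z]]
(stated coefficientwise in z). -/
theorem stmt12 (m : ℕ) (hm : 0 < m) :
    (∀ n : ℕ, ∃ c : ℕ → Polynomial ℤ,
      mbpoly m n = ∑ k ∈ Finset.range (n + 1), intH (c k) * bpoly k) ∧
    (∀ k : ℕ,
      mbpoly m k =
        ∑ n ∈ Finset.range (k + 1),
          bpoly n * PowerSeries.coeff (k - n)
            ((vSeries m) ^ n)) :=
  stmt12_general m
end

section
/- Let p be a prime, A a ring in which p is nilpotent, and y ∈ W(A) a p-typical Witt vector with F(y) = p·y. Then y is topologically nilpotent in W(A): equivalently, the 0-th Witt component y₀ of y is nilpotent in A, so that h(y) converges for every formal power series h over ℤ_p. -/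
lemma natCast_coeff_zero (p : ℕ) [Fact p.Prime] (A : Type*) [CommRing A] (n : ℕ) :
    ((n : WittVector p A)).coeff 0 = (n : A) := by
  induction n with
  | zero => simp [WittVector.zero_coeff]
  | succ k ih => push_cast; rw [WittVector.add_coeff_zero, ih, WittVector.one_coeff_zero]

/-- if p is nilpotent in A and y ∈ W(A) satisfies F(y) = p·y, then
y is topologically nilpotent: its 0-th Witt component is nilpotent in A. -/
theorem stmt14 (p : ℕ) [Fact p.Prime] (A : Type*) [CommRing A]
    (hp : IsNilpotent (p : A)) (y : WittVector p A)
    (hy : WittVector.frobenius y = (p : WittVector p A) * y) :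
    IsNilpotent (y.coeff 0) := by
  have h0 : (WittVector.frobenius y).coeff 0 =
      y.coeff 0 ^ p + (p : A) * MvPolynomial.aeval y.coeff (WittVector.frobeniusPolyAux p 0) := by
    rw [WittVector.coeff_frobenius, WittVector.frobeniusPoly]
    simp [mul_comm]
  have h1 : ((p : WittVector p A) * y).coeff 0 = (p : A) * y.coeff 0 := by
    rw [WittVector.mul_coeff_zero, natCast_coeff_zero]
  have key : y.coeff 0 ^ p =
      (p : A) * y.coeff 0 - (p : A) * MvPolynomial.aeval y.coeff (WittVector.frobeniusPolyAux p 0) := by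
    rw [← h1, ← hy, h0]; ring
  obtain ⟨k, hk⟩ := hp
  have hnil : IsNilpotent (y.coeff 0 ^ p) := by
    rw [key]
    exact Commute.isNilpotent_sub (Commute.all _ _) ⟨k, by rw [mul_pow, hk, zero_mul]⟩ ⟨k, by rw [mul_pow, hk, zero_mul]⟩
  obtain ⟨n, hn⟩ := hnil
  exact ⟨p * n, by rwa [pow_mul]⟩
end

section
/- Let p be a prime, A a ring in which p is nilpotent, and V : W(A) → W(A) the Verschiebung on p-typical Witt vectors. Then id − V : W(A) → W(A) is bijective, and it restricts to a bijection from {y ∈ W(A) : F(y) = p·y} onto {x ∈ W(A) : F(x) = 0}. -/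
open WittVector

section aux

variable {p : ℕ} [Fact p.Prime] {A : Type*} [CommRing A]

private lemma iterV_coeff (x : WittVector p A) :
    ∀ n k, k < n → (verschiebung^[n] x).coeff k = 0 := by
  intro n
  induction n with
  | zero => intro k hk; omega
  | succ n ih =>
    intro k hk
    rw [Function.iterate_succ_apply']
    cases k with
    | zero => exact verschiebung_coeff_zero _
    | succ k => rw [verschiebung_coeff_succ]; exact ih k (by omega)

private lemma coeff_add_eq (a b : WittVector p A) (n k : ℕ) (hk : k < n)
    (hb : ∀ i < n, b.coeff i = 0) : (a + b).coeff k = a.coeff k := by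
  have h0 : WittVector.truncate n b = 0 := by
    rw [← RingHom.mem_ker, WittVector.mem_ker_truncate]; exact hb
  have h2 : WittVector.truncate n (a + b) = WittVector.truncate n a := by
    rw [map_add, h0, add_zero]
  have h := congrArg (fun t => TruncatedWittVector.coeff ⟨k, hk⟩ t) h2
  simpa [-map_add, WittVector.coeff_truncate] using h

private noncomputable def s (x : WittVector p A) (N : ℕ) : WittVector p A :=
  ∑ n ∈ Finset.range N, verschiebung^[n] x

private lemma s_stable (x : WittVector p A) (k : ℕ) :
    ∀ N, k < N → (s x N).coeff k = (s x (k + 1)).coeff k := by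
  intro N
  induction N with
  | zero => intro h; omega
  | succ N ih =>
    intro h
    rcases Nat.lt_or_ge k N with hN | hN
    · rw [← ih hN]
      have hs : s x (N + 1) = s x N + verschiebung^[N] x := Finset.sum_range_succ _ _
      rw [hs]
      exact coeff_add_eq _ _ N k hN (fun i hi => iterV_coeff x N i hi)
    · have : N = k := by omega
      subst this; rfl

private lemma s_succ (x : WittVector p A) (N : ℕ) :
    s x (N + 1) = x + verschiebung (s x N) := by
  rw [s, Finset.sum_range_succ']
  simp only [Function.iterate_succ_apply', Function.iterate_zero_apply]
  rw [← map_sum verschiebung (fun i => verschiebung^[i] x) (Finset.range N)]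
  rw [add_comm]; rfl

private lemma eq_zero_of_fixed {w : WittVector p A} (h : w = verschiebung w) : w = 0 := by
  ext k
  induction k using Nat.strong_induction_on with
  | _ k ih =>
    cases k with
    | zero => rw [h]; simp [verschiebung_coeff_zero]
    | succ k =>
      rw [h, verschiebung_coeff_succ, ih k (by omega)]
      simp

private lemma bij_aux : Function.Bijective
    (fun y : WittVector p A => y - verschiebung y) := by
  constructor
  · intro a b hab
    simp only at hab
    have h : a - b = verschiebung (a - b) := by
      rw [map_sub]
      linear_combination hab
    have := eq_zero_of_fixed h
    exact sub_eq_zero.mp this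
  · intro x
    refine ⟨WittVector.mk p (fun k => (s x (k + 1)).coeff k), ?_⟩
    set y := WittVector.mk p (fun k => (s x (k + 1)).coeff k) with hy
    have hcoeff : ∀ k, y.coeff k = (s x (k + 1)).coeff k := fun k => by
      rw [hy]; exact congrFun (coeff_mk p _) k
    have hVy : ∀ k, verschiebung y = verschiebung (s x k) → True := fun _ _ => trivial
    have key : y = x + verschiebung y := by
      ext k
      rw [hcoeff k, s_succ]
      -- show (x + verschiebung (s x k)).coeff k = (x + verschiebung y).coeff k
      have htr : WittVector.truncate (k+1) (verschiebung (s x k)) =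
          WittVector.truncate (k+1) (verschiebung y) := by
        apply TruncatedWittVector.ext
        intro i
        rw [WittVector.coeff_truncate, WittVector.coeff_truncate]
        rcases i with ⟨i, hi⟩
        cases i with
        | zero => simp [verschiebung_coeff_zero]
        | succ j =>
          simp only [verschiebung_coeff_succ]
          rw [hcoeff j, s_stable x j k (by omega)]
      have h2 : WittVector.truncate (k+1) (x + verschiebung (s x k)) =
          WittVector.truncate (k+1) (x + verschiebung y) := by
        rw [map_add, map_add, htr]
      have h3 := congrArg (fun t => TruncatedWittVector.coeff ⟨k, Nat.lt_succ_self k⟩ t) h2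
      simpa [-map_add, WittVector.coeff_truncate] using h3
    have : y - verschiebung y = x := by
      nth_rewrite 1 [key]; abel
    simpa using this

end aux

/-- with p nilpotent in A, the map id − V on W(A) is bijective, and it
restricts to a bijection from {y : F(y) = p·y} onto {x : F(x) = 0}. -/
theorem stmt15 (p : ℕ) [Fact p.Prime] (A : Type*) [CommRing A]
    (hp : IsNilpotent (p : A)) :
    Function.Bijective
      (fun y : WittVector p A => y - WittVector.verschiebung y) ∧
    Set.BijOn (fun y : WittVector p A => y - WittVector.verschiebung y)
      {y : WittVector p A | WittVector.frobenius y = (p : WittVector p A) * y}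
      {x : WittVector p A | WittVector.frobenius x = 0} := by
  have hbij : Function.Bijective
      (fun y : WittVector p A => y - WittVector.verschiebung y) := bij_aux
  refine ⟨hbij, ?_, ?_, ?_⟩
  · intro y hy
    simp only [Set.mem_setOf_eq] at hy ⊢
    rw [map_sub, frobenius_verschiebung, hy]
    ring
  · exact fun a _ b _ h => hbij.injective h
  · intro x hx
    simp only [Set.mem_setOf_eq] at hx
    obtain ⟨y, hyx⟩ := hbij.surjective x
    refine ⟨y, ?_, hyx⟩
    simp only [Set.mem_setOf_eq]
    have hyx' : y - WittVector.verschiebung y = x := hyx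
    have : WittVector.frobenius (y - WittVector.verschiebung y) = 0 := by
      rw [hyx']; exact hx
    rw [map_sub, frobenius_verschiebung, sub_eq_zero] at this
    rw [this]; ring
end

section
/- Define distributions on the scheme Γ^{[0,n]} = Spec ℤ[u]/(u(u−1)⋯(u−n)) as linear functionals ℤ[u] → ℤ vanishing on the ideal (u(u−1)⋯(u−n)), and let δ_k be evaluation at k. Then for every n ≥ 0: (i) (δ₁ − δ₀)^n (convolution power, where δ_a·δ_b = δ_{a+b} extended bilinearly) lies in n!·Distr(Γ^{[0,n]}); (ii) the elements (δ₁−δ₀)^n/n!, n ≥ 0, form a ℤ-basis of Distr(Γ⁺) = colim_N Distr(Γ^{[0,N]}). -/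
/-
Because δ_a * δ_b = δ_{a+b}, convolving with δ₁ − δ₀ is the forward difference Δ, so
(δ₁ − δ₀)^n sends f to Δⁿf(0) = Σ_{j ≤ n} (-1)^{n-j} C(n,j) f(j); this vanishes on every
multiple of f_{0,n}, which is zero at 0, …, n. On the basis of falling factorials
(u)_k = u(u-1)⋯(u-k+1) of ℤ[u] one has Δⁿ(u)_k(0) = n! if k = n and 0 otherwise, so
(δ₁ − δ₀)^n / n! is exactly the n-th coordinate functional of this basis. A distribution on
Γ^{[0,N]} kills (u)_k for k > N, since f_{0,N} = (u)_{N+1} divides it, so it is the finite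
combination Σ_k φ((u)_k) · (δ₁ − δ₀)^k / k!, and its coefficients are forced by evaluating
at the basis.
-/

open Polynomial

/-- f_{0,n}(u) = u(u−1)⋯(u−n). -/
noncomputable def f0 (n : ℕ) : Polynomial ℤ :=
  ∏ i ∈ Finset.range (n + 1), (Polynomial.X - Polynomial.C (i : ℤ))

/-- convolution of two distributions (functionals on ℤ[u]), dual to the coproduct
u ↦ u⊗1 + 1⊗u: (φ*ψ)(f) = Σ_k φ(c_k)·ψ(uᵏ) where f(x+y) = Σ_k c_k(x)·yᵏ. -/
noncomputable def conv (φ ψ : Polynomial ℤ → ℤ) : Polynomial ℤ → ℤ := fun f =>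
  (f.eval₂
      ((Polynomial.C : Polynomial ℤ →+* Polynomial (Polynomial ℤ)).comp
        (Polynomial.C : ℤ →+* Polynomial ℤ))
      ((Polynomial.X : Polynomial (Polynomial ℤ)) + Polynomial.C Polynomial.X)).sum
    fun k c => φ c * ψ (Polynomial.X ^ k)

/-- convolution powers, with unit δ₀ = evaluation at 0. -/
noncomputable def convPow (φ : Polynomial ℤ → ℤ) : ℕ → (Polynomial ℤ → ℤ)
  | 0 => fun f => f.eval 0
  | n + 1 => conv φ (convPow φ n)

/-- δ₁ − δ₀. -/
noncomputable def dd : Polynomial ℤ → ℤ := fun f => f.eval 1 - f.eval 0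

lemma map_eval₂_X_add_C_X (f : ℤ[X]) (a : ℤ) :
    (f.eval₂ ((C : ℤ[X] →+* ℤ[X][X]).comp C) (X + C X)).map (evalRingHom a) =
      f.comp (X + C a) := by
  rw [← coe_mapRingHom, hom_eval₂, RingHom.ext_int ((mapRingHom _).comp _) C]
  simp [comp]

lemma conv_eval_left (a : ℤ) (ψ : ℤ[X] →+ ℤ) (f : ℤ[X]) :
    conv (fun g => g.eval a) ψ f = ψ (f.comp (X + C a)) := by
  rw [← map_eval₂_X_add_C_X, map, eval₂_eq_sum, sum_def, map_sum, conv, sum_def]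
  simp only [RingHom.comp_apply, C_mul', map_zsmul, smul_eq_mul, coe_evalRingHom]

lemma conv_sub_left (φ₁ φ₂ ψ : ℤ[X] → ℤ) : conv (φ₁ - φ₂) ψ = conv φ₁ ψ - conv φ₂ ψ := by
  ext f
  simp only [conv, sum_def, Pi.sub_apply, sub_mul, Finset.sum_sub_distrib]

lemma conv_dd (ψ : ℤ[X] →+ ℤ) (f : ℤ[X]) : conv dd ψ f = ψ (f.comp (X + 1) - f) := by
  have hdd : dd = (fun g => g.eval 1) - (fun g => g.eval 0) := rfl
  rw [hdd, conv_sub_left, Pi.sub_apply, conv_eval_left, conv_eval_left, map_sub]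
  simp

noncomputable def fwdDiffIterAtZero (n : ℕ) : ℤ[X] →+ ℤ :=
  AddMonoidHom.mk' (fun f => (fwdDiff 1)^[n] f.eval 0) fun f g => by
    simp only [eval_add]
    exact congrFun (fwdDiff_iter_add 1 _ _ n) 0

lemma fwdDiffIterAtZero_apply (n : ℕ) (f : ℤ[X]) :
    fwdDiffIterAtZero n f = (fwdDiff 1)^[n] f.eval 0 := rfl

lemma convPow_dd_eq_fwdDiffIterAtZero (n : ℕ) : convPow dd n = fwdDiffIterAtZero n := by
  induction n with
  | zero => rfl
  | succ n ih =>
    ext f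
    rw [convPow, ih, conv_dd, fwdDiffIterAtZero_apply, fwdDiffIterAtZero_apply,
      Function.iterate_succ_apply]
    exact congrArg (fun F => (fwdDiff 1)^[n] F 0) (funext fun x => by simp [fwdDiff, eval_comp])

lemma fwdDiff_iter_eq_zero_of_forall_le {M G : Type*} [AddCommMonoid M] [AddCommGroup G]
    (h : M) (f : M → G) (n : ℕ) (y : M) (hf : ∀ k ≤ n, f (y + k • h) = 0) :
    (fwdDiff h)^[n] f y = 0 := by
  rw [fwdDiff_iter_eq_sum_shift]
  exact Finset.sum_eq_zero fun k hk => by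
    rw [hf k (Nat.lt_succ_iff.mp (Finset.mem_range.mp hk)), smul_zero]

section descPochhammer

variable (R : Type*) [CommRing R]

lemma descPochhammer_dvd {m n : ℕ} (h : m ≤ n) : descPochhammer R m ∣ descPochhammer R n := by
  obtain ⟨k, rfl⟩ := Nat.exists_eq_add_of_le h
  exact ⟨_, (descPochhammer_mul R m k).symm⟩

variable [IsDomain R]

lemma fwdDiff_iter_eval_descPochhammer_zero (n k : ℕ) :
    (fwdDiff 1)^[n] (descPochhammer R k).eval 0 = if k = n then (n.factorial : R) else 0 := by
  have hdeg := descPochhammer_natDegree R k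
  rcases lt_trichotomy k n with hlt | rfl | hgt
  · rw [if_neg hlt.ne, fwdDiff_iter_eq_zero_of_degree_lt (hdeg.trans_lt hlt), Pi.zero_apply]
  · have h := fwdDiff_iter_degree_eq_factorial (descPochhammer R k)
    rw [hdeg, (monic_descPochhammer R k).leadingCoeff, one_smul] at h
    rw [if_pos rfl, h, Pi.natCast_apply]
  · rw [if_neg hgt.ne']
    refine fwdDiff_iter_eq_zero_of_forall_le _ _ _ _ fun j hj => ?_
    simpa using descPochhammer_eval_coe_nat_of_lt (R := R) (hj.trans_lt hgt)

noncomputable def descPochhammerBasis : Module.Basis ℕ R R[X] :=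
  Sequence.basis ⟨descPochhammer R, fun k => by
      rw [degree_eq_natDegree (monic_descPochhammer R k).ne_zero, descPochhammer_natDegree]⟩
    fun k => by simp [(monic_descPochhammer R k).leadingCoeff]

@[simp]
lemma descPochhammerBasis_apply (k : ℕ) : descPochhammerBasis R k = descPochhammer R k :=
  Sequence.basis_eq_self _ _ k

end descPochhammer

lemma Module.Basis.existsUnique_finsupp_eq_sum_repr {ι R M : Type*} [CommSemiring R]
    [AddCommMonoid M] [Module R M] (b : Module.Basis ι R M) (φ : M →ₗ[R] R)
    (hφ : (Function.support (φ ∘ b)).Finite) :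
    ∃! c : ι →₀ R, ∀ x, φ x = c.sum fun i a => a * b.repr x i := by
  classical
  have sum_coord_apply (c : ι →₀ R) (x : M) :
      (c.sum fun i a => a • b.coord i) x = c.sum fun i a => a * b.repr x i := by
    simp [Finsupp.sum]
  have sum_repr_self (c : ι →₀ R) (j : ι) : (c.sum fun i a => a * b.repr (b j) i) = c j := by
    simp [Finsupp.single_apply, Finsupp.sum, eq_comm]
  refine ⟨Finsupp.ofSupportFinite _ hφ, fun x => ?_, fun c hc => ?_⟩
  · rw [← sum_coord_apply]
    congr 1
    exact b.ext fun j => by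
      rw [sum_coord_apply, sum_repr_self, Finsupp.ofSupportFinite_coe, Function.comp_apply]
  · ext j
    rw [Finsupp.ofSupportFinite_coe, Function.comp_apply, hc, sum_repr_self]

lemma convPow_dd_eq_factorial_mul_repr (n : ℕ) (f : ℤ[X]) :
    convPow dd n f = n.factorial * (descPochhammerBasis ℤ).repr f n := by
  have h : (fwdDiffIterAtZero n).toIntLinearMap =
      (n.factorial : ℤ) • (Finsupp.lapply n ∘ₗ (descPochhammerBasis ℤ).repr) :=
    (descPochhammerBasis ℤ).ext fun k => by
      rw [LinearMap.smul_apply, LinearMap.comp_apply, LinearEquiv.coe_coe, Module.Basis.repr_self,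
        Finsupp.lapply_apply, Finsupp.single_apply, AddMonoidHom.coe_toIntLinearMap,
        descPochhammerBasis_apply, fwdDiffIterAtZero_apply, fwdDiff_iter_eval_descPochhammer_zero]
      simp
  simpa [convPow_dd_eq_fwdDiffIterAtZero] using LinearMap.congr_fun h f

lemma convPow_dd_div_factorial (n : ℕ) (f : ℤ[X]) :
    convPow dd n f / n.factorial = (descPochhammerBasis ℤ).repr f n := by
  rw [convPow_dd_eq_factorial_mul_repr, Int.mul_ediv_cancel_left _ (by positivity)]

lemma f0_eq_descPochhammer (n : ℕ) : f0 n = descPochhammer ℤ (n + 1) := by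
  induction n with
  | zero => simp [f0, descPochhammer_one]
  | succ n ih =>
    rw [f0, Finset.prod_range_succ, ← f0, ih, descPochhammer_succ_right ℤ (n + 1), C_eq_natCast]

/-- (i) (δ₁−δ₀)^n lies in n!·Distr(Γ^{[0,n]}): it kills the ideal
(f_{0,n}) and all its values are divisible by n!; (ii) the functionals
(δ₁−δ₀)^n/n! form a ℤ-basis of Distr(Γ⁺) = colim_N Distr(Γ^{[0,N]}). -/
theorem stmt17 :
    (∀ n : ℕ, ∀ g : Polynomial ℤ, convPow dd n (f0 n * g) = 0) ∧
    (∀ n : ℕ, ∀ f : Polynomial ℤ, (n.factorial : ℤ) ∣ convPow dd n f) ∧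
    (∀ φ : Polynomial ℤ →ₗ[ℤ] ℤ,
      (∃ N : ℕ, ∀ g : Polynomial ℤ, φ (f0 N * g) = 0) →
      ∃! c : ℕ →₀ ℤ, ∀ f : Polynomial ℤ,
        φ f = c.sum fun n a => a * (convPow dd n f / (n.factorial : ℤ))) := by
  refine ⟨fun n g => ?_, fun n f => ⟨_, convPow_dd_eq_factorial_mul_repr n f⟩, ?_⟩
  · rw [convPow_dd_eq_fwdDiffIterAtZero, fwdDiffIterAtZero_apply]
    refine fwdDiff_iter_eq_zero_of_forall_le _ _ _ _ fun j hj => ?_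
    have hj' : (descPochhammer ℤ (n + 1)).eval (j : ℤ) = 0 :=
      descPochhammer_eval_coe_nat_of_lt (Nat.lt_succ_of_le hj)
    simp [f0_eq_descPochhammer, hj']
  · rintro φ ⟨N, hN⟩
    simp_rw [convPow_dd_div_factorial]
    refine (descPochhammerBasis ℤ).existsUnique_finsupp_eq_sum_repr φ
      ((Set.finite_le_nat N).subset fun k hk => ?_)
    by_contra hkN
    obtain ⟨g, hg⟩ := descPochhammer_dvd ℤ (Nat.succ_le_of_lt (not_le.mp hkN))
    exact hk (by simp [hg, ← f0_eq_descPochhammer, hN])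
end

section
/- Let p be a prime. The exponent formula gives a perfect Cartier-duality pairing between the divided power additive group 𝔾_a^♯ and the formal additive group Ĝ_a over Spf ℤ_p: for a p-nilpotent ring A, the pairing (u,v) ↦ exp(uv) = Σ_{n≥0} u^n v^n/n! with u nilpotent in A and v ranging over divided-power points is well-defined (the series is finite) and biadditive: exp((u₁+u₂)v) = exp(u₁v)exp(u₂v) and exp(u(v₁+v₂)) = exp(uv₁)exp(uv₂). -/
/-!
Since `u` is nilpotent, every sum `∑ uⁿ v^[n]` is finite and does not depend on where it is
truncated past the nilpotency index, so all identities can be checked on truncated sums.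
The sum is `1` plus a nilpotent element, hence a unit. Additivity in `u` is the binomial theorem
combined with `v^[i] v^[n-i] = C(n, i) v^[n]`; additivity in `v` is the Cauchy product formula.
In both cases the truncated Cauchy product is exact because every discarded term
`(uⁱ v^[i]) (u'ʲ w^[j])` has `i + j` past the truncation point and so vanishes.
-/

open Finset

section

variable {R : Type*}

theorem sum_range_pow_mul_of_pow_eq_zero [Semiring R] {u : R} (f : ℕ → R) {N K : ℕ}
    (hN : u ^ N = 0) (hNK : N ≤ K) :
    ∑ n ∈ range N, u ^ n * f n = ∑ n ∈ range K, u ^ n * f n :=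
  sum_subset (range_subset_range.mpr hNK) fun n _ hn => by
    rw [pow_eq_zero_of_le (not_lt.mp (mem_range.not.mp hn)) hN, zero_mul]

theorem sum_range_pow_mul_congr_of_pow_eq_zero [Semiring R] {u : R} (f : ℕ → R) {N M : ℕ}
    (hN : u ^ N = 0) (hM : u ^ M = 0) :
    ∑ n ∈ range N, u ^ n * f n = ∑ n ∈ range M, u ^ n * f n := by
  rcases le_total N M with h | h
  · exact sum_range_pow_mul_of_pow_eq_zero f hN h
  · exact (sum_range_pow_mul_of_pow_eq_zero f hM h).symm

theorem isUnit_sum_range_pow_mul [CommRing R] {u : R} {v : ℕ → R} (hv0 : v 0 = 1) {N : ℕ}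
    (hN : u ^ N = 0) : IsUnit (∑ n ∈ range N, u ^ n * v n) := by
  rw [sum_range_pow_mul_of_pow_eq_zero v hN N.le_succ, sum_range_succ', pow_zero, one_mul, hv0]
  refine IsNilpotent.isUnit_add_one (isNilpotent_sum fun n _ => ?_)
  exact (Commute.all _ _).isNilpotent_mul_right ((show IsNilpotent u from ⟨N, hN⟩).pow_succ n)

theorem sum_range_mul_sum_range_of_mul_eq_zero [NonUnitalNonAssocSemiring R] (f g : ℕ → R)
    {K : ℕ} (h : ∀ i j, K ≤ i + j → f i * g j = 0) :
    (∑ i ∈ range K, f i) * ∑ j ∈ range K, g j =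
      ∑ n ∈ range K, ∑ i ∈ range (n + 1), f i * g (n - i) := by
  rw [sum_range_diag_flip K fun i j => f i * g j, sum_mul_sum]
  refine sum_congr rfl fun i _ =>
    (sum_subset (range_subset_range.mpr (K.sub_le i)) fun j _ hj => h i j ?_).symm
  rw [mem_range, not_lt] at hj
  omega

theorem add_pow_mul_eq_sum_mul [CommSemiring R] {v : ℕ → R}
    (hv : ∀ m n : ℕ, v m * v n = ((m + n).choose n : R) * v (m + n)) (x y : R) (n : ℕ) :
    (x + y) ^ n * v n = ∑ i ∈ range (n + 1), x ^ i * v i * (y ^ (n - i) * v (n - i)) := by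
  rw [add_pow, sum_mul]
  refine sum_congr rfl fun i hi => ?_
  have hin : i ≤ n := Nat.lt_succ_iff.mp (mem_range.mp hi)
  have hvv : v i * v (n - i) = (n.choose i : R) * v n := by
    rw [hv, Nat.add_sub_cancel' hin, Nat.choose_symm hin]
  rw [mul_mul_mul_comm (x ^ i), hvv]
  ring

theorem sum_range_add_pow_mul [CommSemiring R] {v : ℕ → R}
    (hv : ∀ m n : ℕ, v m * v n = ((m + n).choose n : R) * v (m + n)) {x y : R} {N : ℕ}
    (hx : x ^ N = 0) (hy : y ^ N = 0) :
    ∑ n ∈ range (2 * N), (x + y) ^ n * v n =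
      (∑ n ∈ range N, x ^ n * v n) * ∑ n ∈ range N, y ^ n * v n := by
  have hN : N ≤ 2 * N := by omega
  rw [sum_range_pow_mul_of_pow_eq_zero v hx hN, sum_range_pow_mul_of_pow_eq_zero v hy hN,
    sum_range_mul_sum_range_of_mul_eq_zero]
  · exact sum_congr rfl fun n _ => add_pow_mul_eq_sum_mul hv x y n
  · intro i j hij
    rcases le_or_gt N i with hi | hj
    · rw [pow_eq_zero_of_le hi hx, zero_mul, zero_mul]
    · rw [pow_eq_zero_of_le (by omega) hy, zero_mul, mul_zero]

theorem sum_range_pow_mul_convolution [CommSemiring R] (v w : ℕ → R) {u : R} {N : ℕ}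
    (hN : u ^ N = 0) :
    ∑ n ∈ range N, u ^ n * ∑ i ∈ range (n + 1), v i * w (n - i) =
      (∑ n ∈ range N, u ^ n * v n) * ∑ n ∈ range N, u ^ n * w n := by
  rw [sum_range_mul_sum_range_of_mul_eq_zero]
  · refine sum_congr rfl fun n _ => ?_
    rw [mul_sum]
    refine sum_congr rfl fun i hi => ?_
    rw [← pow_mul_pow_sub u (Nat.lt_succ_iff.mp (mem_range.mp hi))]
    ring
  · intro i j hij
    rw [mul_mul_mul_comm, ← pow_add, pow_eq_zero_of_le hij hN, zero_mul]
end

theorem stmt18_general (A : Type*) [CommRing A]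
    (u u₁ u₂ : A)
    (v w : ℕ → A) (hv0 : v 0 = 1)
    (hv : ∀ m n : ℕ, v m * v n = ((m + n).choose n : A) * v (m + n)) :
    (∀ N M : ℕ, u ^ N = 0 → u ^ M = 0 →
      ∑ n ∈ Finset.range N, u ^ n * v n = ∑ n ∈ Finset.range M, u ^ n * v n) ∧
    (∀ N : ℕ, u ^ N = 0 → IsUnit (∑ n ∈ Finset.range N, u ^ n * v n)) ∧
    (∀ N : ℕ, u₁ ^ N = 0 → u₂ ^ N = 0 →
      ∑ n ∈ Finset.range (2 * N), (u₁ + u₂) ^ n * v n =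
        (∑ n ∈ Finset.range N, u₁ ^ n * v n) *
          (∑ n ∈ Finset.range N, u₂ ^ n * v n)) ∧
    (∀ N : ℕ, u ^ N = 0 →
      ∑ n ∈ Finset.range N,
          u ^ n * (∑ i ∈ Finset.range (n + 1), v i * w (n - i)) =
        (∑ n ∈ Finset.range N, u ^ n * v n) *
          (∑ n ∈ Finset.range N, u ^ n * w n)) :=
  ⟨fun _ _ hN hM => sum_range_pow_mul_congr_of_pow_eq_zero v hN hM,
    fun _ hN => isUnit_sum_range_pow_mul hv0 hN,
    fun _ h₁ h₂ => sum_range_add_pow_mul hv h₁ h₂,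
    fun _ hN => sum_range_pow_mul_convolution v w hN⟩

/-- over a p-nilpotent ring A, the pairing
exp(uv) = Σ_n uⁿ·v^[n] (u nilpotent, v a divided-power point, i.e. a system
v^[n] with v^[0] = 1 and v^[m]·v^[n] = C(m+n,n)·v^[m+n]) is a finite sum
independent of the truncation point, takes values in units, and is
biadditive: exp((u₁+u₂)v) = exp(u₁v)·exp(u₂v) and
exp(u(v+w)) = exp(uv)·exp(uw), where (v+w)^[n] = Σ_i v^[i]·w^[n−i]. -/
theorem stmt18 (p : ℕ) (hp : p.Prime) (A : Type*) [CommRing A]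
    (hpA : IsNilpotent (p : A))
    (u u₁ u₂ : A) (hu : IsNilpotent u) (hu₁ : IsNilpotent u₁) (hu₂ : IsNilpotent u₂)
    (v w : ℕ → A) (hv0 : v 0 = 1) (hw0 : w 0 = 1)
    (hv : ∀ m n : ℕ, v m * v n = ((m + n).choose n : A) * v (m + n))
    (hw : ∀ m n : ℕ, w m * w n = ((m + n).choose n : A) * w (m + n)) :
    (∀ N M : ℕ, u ^ N = 0 → u ^ M = 0 →
      ∑ n ∈ Finset.range N, u ^ n * v n = ∑ n ∈ Finset.range M, u ^ n * v n) ∧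
    (∀ N : ℕ, u ^ N = 0 → IsUnit (∑ n ∈ Finset.range N, u ^ n * v n)) ∧
    (∀ N : ℕ, u₁ ^ N = 0 → u₂ ^ N = 0 →
      ∑ n ∈ Finset.range (2 * N), (u₁ + u₂) ^ n * v n =
        (∑ n ∈ Finset.range N, u₁ ^ n * v n) *
          (∑ n ∈ Finset.range N, u₂ ^ n * v n)) ∧
    (∀ N : ℕ, u ^ N = 0 →
      ∑ n ∈ Finset.range N,
          u ^ n * (∑ i ∈ Finset.range (n + 1), v i * w (n - i)) =
        (∑ n ∈ Finset.range N, u ^ n * v n) *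
          (∑ n ∈ Finset.range N, u ^ n * w n)) :=
  stmt18_general A u u₁ u₂ v w hv0 hv
end
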